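/- (Theorem 1, FJ-DGD-2 convergence.) Let f_1, ..., f_N : ℝ^n → ℝ be twice continuously differentiable with symmetric Hessians whose eigenvalues all lie in [μ, L], 0 < μ ≤ L; let W be a real symmetric doubly stochastic N × N matrix with smallest eigenvalue λ_min(W); let α > 0; and set ζ = max{|1 − αμ|, |1 − αL|, |λ_min(W) − αL|}, assuming ζ < 1. Let x_i* be the unique minimizer of f_i and x* = (x_1*, ..., x_N*) ∈ (ℝ^n)^N, and let x̄ ∈ (ℝ^n)^N be the unique fixed point of the DGD map T(z)_i = ∑_j W_{ij} z_j − α∇f_i(z_i). Let Λ act on (ℝ^n)^N by (Λv)_i = λ_i v_i with λ_i ∈ [0,1] for all i. Define, from a common initial point y_0 = z_0 = x_0 ∈ (ℝ^n)^N, the iterations y_{k+1,i} = y_{k,i} − α∇f_i(y_{k,i}), z_{k+1} = T(z_k), and x_k = Λ y_k + (I − Λ) z_k. Then for every k ≥ 0, ‖x_k − (Λx* + (I − Λ)x̄)‖ ≤ ζ^k (‖x_0 − x*‖ + ‖x_0 − x̄‖). In particular, the FJ-DGD-2 iterates x_k converge linearly, at rate ζ, to Λx* + (I − Λ)x̄.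 -/

import Mathlib

/-!
Both `y` and `z` are orbits of maps `w ↦ M w - α ∇F(w)`, where `∇F` stacks the gradients and `M`
is symmetric with `m ‖v‖² ≤ ⟪M v, v⟫ ≤ ‖v‖²`: `M = I`, `m = 1` for `y`, and `M = W ⊗ I`,
`m = λmin(W)` for `z` (the upper bound because `W` is doubly stochastic). The derivative
`M - α ∇²F` is then symmetric with numerical range in `[m - αL, 1 - αμ] ⊆ [-ζ, ζ]`, so by the mean
value inequality both maps are `ζ`-contractions, with fixed points `x*` and `x̄` respectively.
Finally `x_k - (Λx* + (I - Λ)x̄) = Λ(y_k - x*) + (I - Λ)(z_k - x̄)`, and `Λ`, `I - Λ` have norm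
at most `1`.
-/

open scoped RealInnerProductSpace

open Set

theorem ContDiff.differentiable_gradient {E : Type*} [NormedAddCommGroup E]
    [InnerProductSpace ℝ E] [CompleteSpace E] {f : E → ℝ} (hf : ContDiff ℝ 2 f) :
    Differentiable ℝ (gradient f) :=
  ((InnerProductSpace.toDual ℝ E).symm.contDiff.comp
    (hf.fderiv_right (m := 1) (by norm_num))).differentiable one_ne_zero

theorem norm_sub_le_pow_mul_of_contraction {F : Type*} [SeminormedAddCommGroup F]
    {T : F → F} {ζ : ℝ} (hζ : 0 ≤ ζ) (hT : ∀ u v, ‖T u - T v‖ ≤ ζ * ‖u - v‖)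
    {p : F} (hp : T p = p) {s : ℕ → F} (hs : ∀ k, s (k + 1) = T (s k)) (k : ℕ) :
    ‖s k - p‖ ≤ ζ ^ k * ‖s 0 - p‖ := by
  induction k with
  | zero => simp
  | succ k ih =>
    calc ‖s (k + 1) - p‖ = ‖T (s k) - T p‖ := by rw [hs, hp]
      _ ≤ ζ * ‖s k - p‖ := hT _ _
      _ ≤ ζ * (ζ ^ k * ‖s 0 - p‖) := by gcongr
      _ = ζ ^ (k + 1) * ‖s 0 - p‖ := by ring

section SymmetricOperator

variable {F : Type*} [NormedAddCommGroup F] [InnerProductSpace ℝ F]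

theorem ContinuousLinearMap.norm_le_of_abs_inner_self_le {T : F →L[ℝ] F}
    (hT : (T : F →ₗ[ℝ] F).IsSymmetric) {c : ℝ} (hc : 0 ≤ c)
    (hq : ∀ v, |⟪T v, v⟫| ≤ c * ‖v‖ ^ 2) : ‖T‖ ≤ c := by
  rw [T.norm_eq_iSup_rayleighQuotient hT]
  refine ciSup_le fun v => ?_
  rcases eq_or_ne v 0 with rfl | hv
  · simpa using hc
  rw [ContinuousLinearMap.rayleighQuotient, ContinuousLinearMap.reApplyInnerSelf_apply,
    abs_div, abs_sq, div_le_iff₀ (by positivity)]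
  exact hq v

theorem norm_sub_le_of_hasFDerivAt_of_abs_inner_le {Φ : F → F} {Φ' : F → F →L[ℝ] F}
    (hΦ : ∀ w, HasFDerivAt Φ (Φ' w) w) (hsym : ∀ w, (Φ' w : F →ₗ[ℝ] F).IsSymmetric)
    {c : ℝ} (hc : 0 ≤ c) (hq : ∀ w v, |⟪Φ' w v, v⟫| ≤ c * ‖v‖ ^ 2) (u v : F) :
    ‖Φ u - Φ v‖ ≤ c * ‖u - v‖ :=
  convex_univ.norm_image_sub_le_of_norm_hasFDerivWithin_le
    (fun w _ => (hΦ w).hasFDerivWithinAt)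
    (fun w _ => (Φ' w).norm_le_of_abs_inner_self_le (hsym w) hc (hq w)) (mem_univ v) (mem_univ u)

end SymmetricOperator

namespace Matrix

variable {ι E : Type*} [Fintype ι] [NormedAddCommGroup E] [InnerProductSpace ℝ E]

theorem PosSemidef.sum_mul_inner_nonneg {A : Matrix ι ι ℝ} (hA : A.PosSemidef) (v : ι → E) :
    0 ≤ ∑ i, ∑ j, A i j * ⟪v i, v j⟫ := by
  have := (hA.hadamard (posSemidef_gram ℝ v)).dotProduct_mulVec_nonneg (fun _ => 1)
  simpa [dotProduct, mulVec, hadamard, gram] using this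

theorem IsHermitian.posSemidef_sub_algebraMap [DecidableEq ι] {A : Matrix ι ι ℝ}
    (hA : A.IsHermitian) {c : ℝ} (hc : ∀ i, c ≤ hA.eigenvalues i) :
    (A - algebraMap ℝ _ c).PosSemidef := by
  rw [posSemidef_iff_isHermitian_and_spectrum_nonneg]
  refine ⟨hA.sub (isHermitian_diagonal _), ?_⟩
  rw [← spectrum.sub_singleton_eq, hA.spectrum_real_eq_range_eigenvalues]
  rintro _ ⟨_, ⟨i, rfl⟩, _, rfl, rfl⟩
  simpa using hc i

end Matrix

namespace PiLp

variable {ι E : Type*} [NormedAddCommGroup E] [InnerProductSpace ℝ E]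

def diagCLM (A : ι → E →L[ℝ] E) : PiLp 2 (fun _ : ι => E) →L[ℝ] PiLp 2 (fun _ : ι => E) :=
  (PiLp.continuousLinearEquiv 2 ℝ _).symm.toContinuousLinearMap ∘L
    ContinuousLinearMap.pi fun i => A i ∘L PiLp.proj 2 _ i

@[simp]
theorem diagCLM_apply (A : ι → E →L[ℝ] E) (v : PiLp 2 fun _ : ι => E) (i : ι) :
    diagCLM A v i = A i (v i) := rfl

variable [Fintype ι]

theorem norm_diagCLM_apply_le {A : ι → E →L[ℝ] E} (hA : ∀ i x, ‖A i x‖ ≤ ‖x‖)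
    (v : PiLp 2 fun _ : ι => E) : ‖diagCLM A v‖ ≤ ‖v‖ := by
  refine (pow_le_pow_iff_left₀ (norm_nonneg _) (norm_nonneg _) two_ne_zero).mp ?_
  simp only [PiLp.norm_sq_eq_of_L2]
  exact Finset.sum_le_sum fun i _ => pow_le_pow_left₀ (norm_nonneg _) (hA i (v i)) 2

theorem norm_diagCLM_smul_id_apply_le {c : ι → ℝ} (hc : ∀ i, c i ∈ Icc (0 : ℝ) 1)
    (v : PiLp 2 fun _ : ι => E) :
    ‖diagCLM (fun i => c i • ContinuousLinearMap.id ℝ E) v‖ ≤ ‖v‖ := by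
  refine norm_diagCLM_apply_le (fun i x => ?_) v
  rw [_root_.smul_apply, ContinuousLinearMap.id_apply, norm_smul,
    Real.norm_of_nonneg (hc i).1]
  exact mul_le_of_le_one_left (norm_nonneg x) (hc i).2

theorem norm_sub_le_of_eq_smul_add_one_sub_smul {l : ι → ℝ} (hl : ∀ i, l i ∈ Icc (0 : ℝ) 1)
    {x a b x' a' b' : PiLp 2 fun _ : ι => E} (hx : ∀ i, x i = l i • a i + (1 - l i) • b i)
    (hx' : ∀ i, x' i = l i • a' i + (1 - l i) • b' i) :
    ‖x - x'‖ ≤ ‖a - a'‖ + ‖b - b'‖ := by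
  have hsplit : x - x' = diagCLM (fun i => l i • ContinuousLinearMap.id ℝ E) (a - a') +
      diagCLM (fun i => (1 - l i) • ContinuousLinearMap.id ℝ E) (b - b') := by
    ext1 i
    simp only [sub_apply, hx, hx', map_sub, add_apply, diagCLM_apply, _root_.smul_apply,
      ContinuousLinearMap.id_apply]
    abel
  have hl' i : 1 - l i ∈ Icc (0 : ℝ) 1 := ⟨by linarith [(hl i).2], by linarith [(hl i).1]⟩
  rw [hsplit]
  exact (norm_add_le _ _).trans (add_le_add (norm_diagCLM_smul_id_apply_le hl _)
    (norm_diagCLM_smul_id_apply_le hl' _))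

theorem inner_diagCLM_apply (A : ι → E →L[ℝ] E) (u v : PiLp 2 fun _ : ι => E) :
    ⟪diagCLM A u, v⟫ = ∑ i, ⟪A i (u i), v i⟫ := by
  simp [PiLp.inner_apply]

theorem isSymmetric_diagCLM {A : ι → E →L[ℝ] E} (hA : ∀ i, (A i : E →ₗ[ℝ] E).IsSymmetric) :
    (diagCLM A : PiLp 2 (fun _ : ι => E) →ₗ[ℝ] PiLp 2 (fun _ : ι => E)).IsSymmetric :=
    fun u v => by
  simp only [ContinuousLinearMap.coe_coe, PiLp.inner_apply, diagCLM_apply]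
  exact Finset.sum_congr rfl fun i _ => hA i (u i) (v i)

theorem mul_norm_sq_le_inner_diagCLM_self {A : ι → E →L[ℝ] E} {a : ℝ}
    (hA : ∀ i x, a * ‖x‖ ^ 2 ≤ ⟪A i x, x⟫) (v : PiLp 2 fun _ : ι => E) :
    a * ‖v‖ ^ 2 ≤ ⟪diagCLM A v, v⟫ := by
  rw [inner_diagCLM_apply, PiLp.norm_sq_eq_of_L2, Finset.mul_sum]
  exact Finset.sum_le_sum fun i _ => hA i (v i)

theorem inner_diagCLM_self_le_mul_norm_sq {A : ι → E →L[ℝ] E} {b : ℝ}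
    (hA : ∀ i x, ⟪A i x, x⟫ ≤ b * ‖x‖ ^ 2) (v : PiLp 2 fun _ : ι => E) :
    ⟪diagCLM A v, v⟫ ≤ b * ‖v‖ ^ 2 := by
  rw [inner_diagCLM_apply, PiLp.norm_sq_eq_of_L2, Finset.mul_sum]
  exact Finset.sum_le_sum fun i _ => hA i (v i)

/-- The action of `W ⊗ I` on `Eᴺ`. -/
def matrixCLM (W : Matrix ι ι ℝ) : PiLp 2 (fun _ : ι => E) →L[ℝ] PiLp 2 (fun _ : ι => E) :=
  (PiLp.continuousLinearEquiv 2 ℝ _).symm.toContinuousLinearMap ∘L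
    ContinuousLinearMap.pi fun i => ∑ j, W i j • PiLp.proj 2 _ j

@[simp]
theorem matrixCLM_apply (W : Matrix ι ι ℝ) (v : PiLp 2 fun _ : ι => E) (i : ι) :
    matrixCLM W v i = ∑ j, W i j • v j := by
  simp [matrixCLM]

theorem inner_matrixCLM_apply (W : Matrix ι ι ℝ) (u v : PiLp 2 fun _ : ι => E) :
    ⟪matrixCLM W u, v⟫ = ∑ i, ∑ j, W i j * ⟪u j, v i⟫ := by
  simp [PiLp.inner_apply, sum_inner, real_inner_smul_left]

theorem isSymmetric_matrixCLM {W : Matrix ι ι ℝ} (hW : W.IsHermitian) :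
    (matrixCLM (E := E) W : PiLp 2 (fun _ : ι => E) →ₗ[ℝ] PiLp 2 (fun _ : ι => E)).IsSymmetric :=
    fun u v => by
  rw [ContinuousLinearMap.coe_coe, inner_matrixCLM_apply, real_inner_comm,
    inner_matrixCLM_apply, Finset.sum_comm]
  refine Finset.sum_congr rfl fun i _ => Finset.sum_congr rfl fun j _ => ?_
  rw [← hW.apply i j, star_trivial, real_inner_comm]

theorem inner_matrixCLM_self_le {W : Matrix ι ι ℝ} (hnn : ∀ i j, 0 ≤ W i j)
    (hrow : ∀ i, ∑ j, W i j = 1) (hcol : ∀ j, ∑ i, W i j = 1) (v : PiLp 2 fun _ : ι => E) :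
    ⟪matrixCLM W v, v⟫ ≤ ‖v‖ ^ 2 := by
  calc ⟪matrixCLM W v, v⟫ = ∑ i, ∑ j, W i j * ⟪v j, v i⟫ := inner_matrixCLM_apply W v v
    _ ≤ ∑ i, ∑ j, W i j * ((‖v i‖ ^ 2 + ‖v j‖ ^ 2) / 2) := by
      gcongr with i _ j _
      · exact hnn i j
      · nlinarith [real_inner_le_norm (v j) (v i), sq_nonneg (‖v i‖ - ‖v j‖)]
    _ = (∑ i, ∑ j, W i j * ‖v i‖ ^ 2 + ∑ j, ∑ i, W i j * ‖v j‖ ^ 2) / 2 := by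
      rw [Finset.sum_comm (f := fun j i => W i j * ‖v j‖ ^ 2), ← Finset.sum_add_distrib,
        Finset.sum_div]
      simp only [← Finset.sum_add_distrib, Finset.sum_div]
      ring_nf
    _ = ‖v‖ ^ 2 := by
      simp only [← Finset.mul_sum, ← Finset.sum_mul, hrow, hcol, PiLp.norm_sq_eq_of_L2]
      ring

theorem mul_norm_sq_le_inner_matrixCLM_self [DecidableEq ι] {W : Matrix ι ι ℝ}
    (hW : W.IsHermitian) {c : ℝ} (hc : ∀ i, c ≤ hW.eigenvalues i) (v : PiLp 2 fun _ : ι => E) :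
    c * ‖v‖ ^ 2 ≤ ⟪matrixCLM W v, v⟫ := by
  have key := (hW.posSemidef_sub_algebraMap hc).sum_mul_inner_nonneg v
  simp only [Matrix.sub_apply, Matrix.algebraMap_matrix_apply, Algebra.algebraMap_self,
    RingHom.id_apply, sub_mul, ite_mul, zero_mul, Finset.sum_sub_distrib, Finset.sum_ite_eq,
    Finset.mem_univ, if_true, real_inner_self_eq_norm_sq, sub_nonneg] at key
  rw [inner_matrixCLM_apply, PiLp.norm_sq_eq_of_L2, Finset.mul_sum]
  convert key using 4 with i _ j _
  exact real_inner_comm _ _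

end PiLp

section StackedGradient

variable {ι E : Type*} [Fintype ι] [NormedAddCommGroup E] [InnerProductSpace ℝ E] [CompleteSpace E]

noncomputable def stackedGradient (f : ι → E → ℝ) (w : PiLp 2 fun _ : ι => E) :
    PiLp 2 fun _ : ι => E :=
  WithLp.toLp 2 fun i => gradient (f i) (w i)

theorem hasFDerivAt_stackedGradient {f : ι → E → ℝ}
    (hf : ∀ i, Differentiable ℝ (gradient (f i))) (w : PiLp 2 fun _ : ι => E) :
    HasFDerivAt (stackedGradient f)
      (PiLp.diagCLM fun i => fderiv ℝ (gradient (f i)) (w i)) w := by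
  rw [← hasFDerivWithinAt_univ, hasFDerivWithinAt_piLp]
  intro i
  exact ((hf i (w i)).hasFDerivAt.comp w
    (PiLp.hasFDerivAt_apply (𝕜 := ℝ) 2 w i)).hasFDerivWithinAt

theorem norm_gradientStep_sub_le {f : ι → E → ℝ} {μ L α m ζ : ℝ}
    (hf : ∀ i, Differentiable ℝ (gradient (f i)))
    (hHsym : ∀ i x u v, ⟪fderiv ℝ (gradient (f i)) x u, v⟫ =
      ⟪u, fderiv ℝ (gradient (f i)) x v⟫)
    (hHess : ∀ i x v, μ * ‖v‖ ^ 2 ≤ ⟪fderiv ℝ (gradient (f i)) x v, v⟫ ∧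
      ⟪fderiv ℝ (gradient (f i)) x v, v⟫ ≤ L * ‖v‖ ^ 2)
    {M : (PiLp 2 fun _ : ι => E) →L[ℝ] PiLp 2 fun _ : ι => E}
    (hM : (M : (PiLp 2 fun _ : ι => E) →ₗ[ℝ] PiLp 2 fun _ : ι => E).IsSymmetric)
    (hMlow : ∀ v, m * ‖v‖ ^ 2 ≤ ⟪M v, v⟫) (hMup : ∀ v, ⟪M v, v⟫ ≤ ‖v‖ ^ 2)
    (hα : 0 ≤ α) (hζ : 0 ≤ ζ) (hζμ : 1 - α * μ ≤ ζ) (hζL : α * L - m ≤ ζ)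
    (u v : PiLp 2 fun _ : ι => E) :
    ‖(M u - α • stackedGradient f u) - (M v - α • stackedGradient f v)‖ ≤ ζ * ‖u - v‖ := by
  refine norm_sub_le_of_hasFDerivAt_of_abs_inner_le (Φ := fun w => M w - α • stackedGradient f w)
    (Φ' := fun w => M - α • PiLp.diagCLM fun i => fderiv ℝ (gradient (f i)) (w i))
    (fun w => M.hasFDerivAt.sub ((hasFDerivAt_stackedGradient hf w).const_smul α))
    (fun w => hM.sub ((PiLp.isSymmetric_diagCLM fun i => hHsym i (w i)).smul (by simp)))
    hζ (fun w p => ?_) u v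
  have hlow := PiLp.mul_norm_sq_le_inner_diagCLM_self (fun i => (hHess i (w i) · |>.1)) p
  have hup := PiLp.inner_diagCLM_self_le_mul_norm_sq (fun i => (hHess i (w i) · |>.2)) p
  simp only [sub_apply, smul_apply, inner_sub_left, real_inner_smul_left, abs_le]
  constructor
  · nlinarith [hMlow p, mul_le_mul_of_nonneg_left hup hα]
  · nlinarith [hMup p, mul_le_mul_of_nonneg_left hlow hα]

end StackedGradient

theorem stmt6_general {n N : ℕ} [NeZero N]
    (f : Fin N → EuclideanSpace ℝ (Fin n) → ℝ) (μ L α : ℝ)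
    (hα : 0 < α)
    (hC2 : ∀ i, ContDiff ℝ 2 (f i))
    (hHsym : ∀ i x u v, ⟪fderiv ℝ (gradient (f i)) x u, v⟫ =
      ⟪u, fderiv ℝ (gradient (f i)) x v⟫)
    (hHess : ∀ i x v, μ * ‖v‖ ^ 2 ≤ ⟪fderiv ℝ (gradient (f i)) x v, v⟫ ∧
      ⟪fderiv ℝ (gradient (f i)) x v, v⟫ ≤ L * ‖v‖ ^ 2)
    (W : Matrix (Fin N) (Fin N) ℝ) (hW : W.IsHermitian)
    (hWnn : ∀ i j, 0 ≤ W i j)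
    (hWrow : ∀ i, ∑ j, W i j = 1)
    (hWcol : ∀ j, ∑ i, W i j = 1)
    (ζ : ℝ)
    (hζ : ζ = max (max |1 - α * μ| |1 - α * L|)
      |Finset.univ.inf' Finset.univ_nonempty hW.eigenvalues - α * L|)
    -- `xstar` stacks the unique local minimizers `x_i*` of the `f i`
    (xstar : PiLp 2 fun _ : Fin N => EuclideanSpace ℝ (Fin n))
    (hxstar : ∀ i x, f i (xstar i) ≤ f i x)
    -- `xbar` is the (unique) fixed point of the DGD map
    (xbar : PiLp 2 fun _ : Fin N => EuclideanSpace ℝ (Fin n))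
    (hxbar : ∀ i, xbar i = ∑ j, W i j • xbar j - α • gradient (f i) (xbar i))
    -- Friedkin-Johnsen stubbornness parameters
    (l : Fin N → ℝ) (hl : ∀ i, l i ∈ Set.Icc (0 : ℝ) 1)
    -- the FJ-DGD-2 iterations from a common initial point `x0`
    (x0 : PiLp 2 fun _ : Fin N => EuclideanSpace ℝ (Fin n))
    (y z x : ℕ → PiLp 2 fun _ : Fin N => EuclideanSpace ℝ (Fin n))
    (hy0 : y 0 = x0) (hz0 : z 0 = x0)
    (hy : ∀ k i, y (k + 1) i = y k i - α • gradient (f i) (y k i))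
    (hz : ∀ k i, z (k + 1) i = ∑ j, W i j • z k j - α • gradient (f i) (z k i))
    (hx : ∀ k i, x k i = l i • y k i + (1 - l i) • z k i)
    -- `xhat = Λ x* + (I − Λ) x̄`
    (xhat : PiLp 2 fun _ : Fin N => EuclideanSpace ℝ (Fin n))
    (hxhat : ∀ i, xhat i = l i • xstar i + (1 - l i) • xbar i) :
    ∀ k, ‖x k - xhat‖ ≤ ζ ^ k * (‖x0 - xstar‖ + ‖x0 - xbar‖) := by
  set lmin := Finset.univ.inf' Finset.univ_nonempty hW.eigenvalues
  obtain ⟨hζ1, hζ2, hζ3⟩ : |1 - α * μ| ≤ ζ ∧ |1 - α * L| ≤ ζ ∧ |lmin - α * L| ≤ ζ := by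
    simp [hζ]
  have hζ0 : 0 ≤ ζ := (abs_nonneg _).trans hζ1
  have hlmin i : lmin ≤ hW.eigenvalues i := Finset.inf'_le _ (Finset.mem_univ i)
  have hgrad i := (hC2 i).differentiable_gradient
  have hgrad0 i : gradient (f i) (xstar i) = 0 := by
    simp [gradient, IsLocalMin.fderiv_eq_zero (Filter.Eventually.of_forall (hxstar i))]
  have hy_dist : ∀ k, ‖y k - xstar‖ ≤ ζ ^ k * ‖x0 - xstar‖ := hy0 ▸
    norm_sub_le_pow_mul_of_contraction hζ0
      (norm_gradientStep_sub_le hgrad hHsym hHess (M := .id ℝ _) (m := 1) (fun _ _ => rfl)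
        (by simp) (by simp) hα.le hζ0 (abs_le.mp hζ1).2 (by linarith [(abs_le.mp hζ2).1]))
      (PiLp.ext fun i => by simp [stackedGradient, hgrad0])
      (fun k => PiLp.ext fun i => by simp [stackedGradient, hy k i])
  have hz_dist : ∀ k, ‖z k - xbar‖ ≤ ζ ^ k * ‖x0 - xbar‖ := hz0 ▸
    norm_sub_le_pow_mul_of_contraction hζ0
      (norm_gradientStep_sub_le hgrad hHsym hHess (PiLp.isSymmetric_matrixCLM hW) (m := lmin)
        (PiLp.mul_norm_sq_le_inner_matrixCLM_self hW hlmin)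
        (PiLp.inner_matrixCLM_self_le hWnn hWrow hWcol)
        hα.le hζ0 (abs_le.mp hζ1).2 (by linarith [(abs_le.mp hζ3).1]))
      (PiLp.ext fun i => by simp [stackedGradient, ← hxbar i])
      (fun k => PiLp.ext fun i => by simp [stackedGradient, hz k i])
  intro k
  calc ‖x k - xhat‖ ≤ ‖y k - xstar‖ + ‖z k - xbar‖ :=
        PiLp.norm_sub_le_of_eq_smul_add_one_sub_smul hl (hx k) hxhat
    _ ≤ ζ ^ k * ‖x0 - xstar‖ + ζ ^ k * ‖x0 - xbar‖ := add_le_add (hy_dist k) (hz_dist k)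
    _ = ζ ^ k * (‖x0 - xstar‖ + ‖x0 - xbar‖) := by ring

/-- Theorem 1, FJ-DGD-2 convergence: the FJ-DGD-2 iterates
`x_k = Λ y_k + (I − Λ) z_k` converge linearly, at rate
`ζ = max {|1 − αμ|, |1 − αL|, |λmin(W) − αL|}`, to `Λx* + (I − Λ)x̄`. -/
theorem stmt6 {n N : ℕ} [NeZero N]
    (f : Fin N → EuclideanSpace ℝ (Fin n) → ℝ) (μ L α : ℝ)
    (hμ : 0 < μ) (hμL : μ ≤ L) (hα : 0 < α)
    (hC2 : ∀ i, ContDiff ℝ 2 (f i))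
    (hHsym : ∀ i x u v, ⟪fderiv ℝ (gradient (f i)) x u, v⟫ =
      ⟪u, fderiv ℝ (gradient (f i)) x v⟫)
    (hHess : ∀ i x v, μ * ‖v‖ ^ 2 ≤ ⟪fderiv ℝ (gradient (f i)) x v, v⟫ ∧
      ⟪fderiv ℝ (gradient (f i)) x v, v⟫ ≤ L * ‖v‖ ^ 2)
    (W : Matrix (Fin N) (Fin N) ℝ) (hW : W.IsHermitian)
    (hWnn : ∀ i j, 0 ≤ W i j)
    (hWrow : ∀ i, ∑ j, W i j = 1)
    (hWcol : ∀ j, ∑ i, W i j = 1)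
    (ζ : ℝ)
    (hζ : ζ = max (max |1 - α * μ| |1 - α * L|)
      |Finset.univ.inf' Finset.univ_nonempty hW.eigenvalues - α * L|)
    (hζlt : ζ < 1)
    -- `xstar` stacks the unique local minimizers `x_i*` of the `f i`
    (xstar : PiLp 2 fun _ : Fin N => EuclideanSpace ℝ (Fin n))
    (hxstar : ∀ i x, f i (xstar i) ≤ f i x)
    -- `xbar` is the (unique) fixed point of the DGD map
    (xbar : PiLp 2 fun _ : Fin N => EuclideanSpace ℝ (Fin n))
    (hxbar : ∀ i, xbar i = ∑ j, W i j • xbar j - α • gradient (f i) (xbar i))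
    -- Friedkin-Johnsen stubbornness parameters
    (l : Fin N → ℝ) (hl : ∀ i, l i ∈ Set.Icc (0 : ℝ) 1)
    -- the FJ-DGD-2 iterations from a common initial point `x0`
    (x0 : PiLp 2 fun _ : Fin N => EuclideanSpace ℝ (Fin n))
    (y z x : ℕ → PiLp 2 fun _ : Fin N => EuclideanSpace ℝ (Fin n))
    (hy0 : y 0 = x0) (hz0 : z 0 = x0)
    (hy : ∀ k i, y (k + 1) i = y k i - α • gradient (f i) (y k i))
    (hz : ∀ k i, z (k + 1) i = ∑ j, W i j • z k j - α • gradient (f i) (z k i))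
    (hx : ∀ k i, x k i = l i • y k i + (1 - l i) • z k i)
    -- `xhat = Λ x* + (I − Λ) x̄`
    (xhat : PiLp 2 fun _ : Fin N => EuclideanSpace ℝ (Fin n))
    (hxhat : ∀ i, xhat i = l i • xstar i + (1 - l i) • xbar i) :
    ∀ k, ‖x k - xhat‖ ≤ ζ ^ k * (‖x0 - xstar‖ + ‖x0 - xbar‖) :=
  stmt6_general f μ L α hα hC2 hHsym hHess W hW hWnn hWrow hWcol ζ hζ xstar hxstar xbar hxbar l hl
    x0 y z x hy0 hz0 hy hz hx xhat hxhat
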